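/- In the setting of the previous statement, if c is not (a.e.) constant on 𝕋ⁿ, then ⟨cN₁⟩ < 0 strictly; and if c is constant then N₁ = 0 and ⟨cN₁⟩ = 0. -/

import Mathlib

/-!
Testing the weak equation against `N₁` itself and using `∫ N₁ = 0` gives the energy identity
`∫ a∇N₁·∇N₁ = -⟨cN₁⟩`, so coercivity yields `⟨cN₁⟩ ≤ 0`. In the equality case `∇N₁ ≡ 0`, so `N₁`
is constant, hence zero by its zero mean; the weak equation then says that `⟨c⟩ - c` integrates
to zero against every `C¹` periodic function, and testing it against its own (periodic)
mollifications, which converge uniformly, forces `c ≡ ⟨c⟩`. If `c` is constant,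
`⟨cN₁⟩ = c ∫ N₁ = 0` and the equality case applies.
-/

open MeasureTheory Set Convolution ContinuousLinearMap

def IntPeriodic {n : ℕ} {α : Type*} (f : (Fin n → ℝ) → α) : Prop :=
  ∀ (x : Fin n → ℝ) (k : Fin n → ℤ), f (x + fun i => (k i : ℝ)) = f x

namespace IntPeriodic

variable {n : ℕ} {α : Type*} {f : (Fin n → ℝ) → α}

theorem exists_mem_Icc_eq (hf : IntPeriodic f) (x : Fin n → ℝ) :
    ∃ y ∈ Icc (0 : Fin n → ℝ) 1, f x = f y := by
  refine ⟨fun i => Int.fract (x i),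
    ⟨fun i => Int.fract_nonneg _, fun i => (Int.fract_lt_one _).le⟩, ?_⟩
  rw [← hf (fun i => Int.fract (x i)) fun i => ⌊x i⌋]
  exact congrArg f (funext fun i => (Int.fract_add_floor (x i)).symm)

theorem forall_of_forall_mem_Icc (hf : IntPeriodic f) {p : α → Prop}
    (h : ∀ y ∈ Icc (0 : Fin n → ℝ) 1, p (f y)) (x : Fin n → ℝ) : p (f x) := by
  obtain ⟨y, hy, hxy⟩ := hf.exists_mem_Icc_eq x
  exact hxy ▸ h y hy

theorem comp {β : Type*} (hf : IntPeriodic f) (g : α → β) : IntPeriodic (g ∘ f) :=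
  fun x k => congrArg g (hf x k)

theorem fderiv {E : Type*} [NormedAddCommGroup E] [NormedSpace ℝ E]
    {f : (Fin n → ℝ) → E} (hf : IntPeriodic f) : IntPeriodic (fderiv ℝ f) := fun x k => by
  rw [← fderiv_comp_add_right, funext fun y => hf y k]

theorem convolution_right {g : (Fin n → ℝ) → ℝ} (hg : IntPeriodic g)
    (φ : (Fin n → ℝ) → ℝ) : IntPeriodic (φ ⋆[lsmul ℝ ℝ, volume] g) := fun x k => by
  simp only [convolution_def, add_sub_right_comm, (hg · k)]

end IntPeriodic

theorem Icc_subset_closure_interior_Icc_pi {n : ℕ} :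
    Icc (0 : Fin n → ℝ) 1 ⊆ closure (interior (Icc 0 1)) := by
  rw [← pi_univ_Icc, interior_pi_set finite_univ, closure_pi_set]
  simp [interior_Icc, closure_Ioo (zero_ne_one' ℝ)]

theorem volume_real_Icc_zero_one_pi {n : ℕ} : volume.real (Icc (0 : Fin n → ℝ) 1) = 1 := by
  simp [measureReal_def, Real.volume_Icc_pi_toReal zero_le_one]

theorem eqOn_zero_of_setIntegral_Icc_eq_zero {n : ℕ} {f : (Fin n → ℝ) → ℝ}
    (hf : Continuous f) (hf_nonneg : 0 ≤ f) (h : ∫ x in Icc (0 : Fin n → ℝ) 1, f x = 0) :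
    EqOn f 0 (Icc 0 1) := by
  refine Measure.eqOn_of_ae_eq (μ := volume) ?_ hf.continuousOn continuousOn_const
    Icc_subset_closure_interior_Icc_pi
  exact (setIntegral_eq_zero_iff_of_nonneg_ae (.of_forall hf_nonneg) hf.integrableOn_Icc).1 h

theorem IntPeriodic.eq_zero_of_setIntegral_Icc_eq_zero {n : ℕ} {f : (Fin n → ℝ) → ℝ}
    (hper : IntPeriodic f) (hf : Continuous f)
    (hf_nonneg : 0 ≤ f) (h : ∫ x in Icc (0 : Fin n → ℝ) 1, f x = 0) : f = 0 :=
  funext <| hper.forall_of_forall_mem_Icc (p := (· = 0))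
    (eqOn_zero_of_setIntegral_Icc_eq_zero hf hf_nonneg h)

theorem IsCompact.exists_contDiffBump_forall_dist_normed_convolution_le
    {G E : Type*} [NormedAddCommGroup G] [NormedSpace ℝ G] [HasContDiffBump G]
    [MeasurableSpace G] [BorelSpace G] [FiniteDimensional ℝ G] (μ : Measure G)
    [μ.IsAddHaarMeasure] [NormedAddCommGroup E] [NormedSpace ℝ E] [CompleteSpace E]
    {K : Set G} (hK : IsCompact K) {g : G → E} (hg : Continuous g) {ε : ℝ} (hε : 0 < ε) :
    ∃ φ : ContDiffBump (0 : G),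
      ∀ x ∈ K, dist ((φ.normed μ ⋆[lsmul ℝ ℝ, μ] g) x) (g x) ≤ ε := by
  obtain ⟨δ, hδ, hclose⟩ := Metric.mem_uniformity_dist.1 <|
    hK.uniformContinuousAt_of_continuousAt g (fun x _ => hg.continuousAt)
      (Metric.dist_mem_uniformity hε)
  refine ⟨⟨δ / 2, δ, half_pos hδ, half_lt_self hδ⟩, fun x hx => ?_⟩
  refine ContDiffBump.dist_normed_convolution_le hg.aestronglyMeasurable fun y hy => ?_
  rw [dist_comm]
  exact (hclose (by rwa [dist_comm]) hx).le

theorem IntPeriodic.setIntegral_Icc_mul_self_le {n : ℕ} {g : (Fin n → ℝ) → ℝ}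
    (hper : IntPeriodic g) (hg : Continuous g)
    (h : ∀ φ : (Fin n → ℝ) → ℝ, ContDiff ℝ 1 φ → IntPeriodic φ →
      ∫ x in Icc (0 : Fin n → ℝ) 1, g x * φ x = 0)
    {ε : ℝ} (hε : 0 < ε) :
    ∫ x in Icc (0 : Fin n → ℝ) 1, g x * g x ≤ ε * ∫ x in Icc (0 : Fin n → ℝ) 1, |g x| := by
  have hK : IsCompact (Icc (0 : Fin n → ℝ) 1) := isCompact_Icc
  obtain ⟨b, hb⟩ := hK.exists_contDiffBump_forall_dist_normed_convolution_le volume hg hε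
  set φ := b.normed volume ⋆[lsmul ℝ ℝ, volume] g
  have hφ : ContDiff ℝ 1 φ :=
    b.hasCompactSupport_normed.contDiff_convolution_left _ b.contDiff_normed hg.locallyIntegrable
  calc ∫ x in Icc (0 : Fin n → ℝ) 1, g x * g x
      = ∫ x in Icc (0 : Fin n → ℝ) 1, g x * (g x - φ x) := by
        simp only [mul_sub]
        rw [integral_sub (f := fun x => g x * g x) (g := fun x => g x * φ x)
            (hg.mul hg).integrableOn_Icc (hg.mul hφ.continuous).integrableOn_Icc,
          h φ hφ (hper.convolution_right _), sub_zero]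
    _ ≤ ∫ x in Icc (0 : Fin n → ℝ) 1, |g x| * ε := by
        refine setIntegral_mono_on (hg.mul (hg.sub hφ.continuous)).integrableOn_Icc
          (hg.abs.mul continuous_const).integrableOn_Icc measurableSet_Icc fun x hx => ?_
        calc g x * (g x - φ x) ≤ |g x| * |g x - φ x| := (le_abs_self _).trans (abs_mul _ _).le
          _ ≤ |g x| * ε := by
            gcongr
            rw [← Real.dist_eq, dist_comm]
            exact hb x hx
    _ = ε * ∫ x in Icc (0 : Fin n → ℝ) 1, |g x| := by rw [integral_mul_const, mul_comm]

theorem IntPeriodic.eq_zero_of_forall_setIntegral_Icc_mul_eq_zero {n : ℕ}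
    {g : (Fin n → ℝ) → ℝ} (hper : IntPeriodic g) (hg : Continuous g)
    (h : ∀ φ : (Fin n → ℝ) → ℝ, ContDiff ℝ 1 φ → IntPeriodic φ →
      ∫ x in Icc (0 : Fin n → ℝ) 1, g x * φ x = 0) :
    g = 0 := by
  set B := ∫ x in Icc (0 : Fin n → ℝ) 1, |g x|
  have hB : 0 ≤ B := setIntegral_nonneg measurableSet_Icc fun _ _ => abs_nonneg _
  have hsq_nonpos : ∫ x in Icc (0 : Fin n → ℝ) 1, g x * g x ≤ 0 := by
    refine le_of_forall_pos_le_add fun ε hε => ?_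
    calc ∫ x in Icc (0 : Fin n → ℝ) 1, g x * g x
        ≤ ε / (B + 1) * B := hper.setIntegral_Icc_mul_self_le hg h (by positivity)
      _ ≤ 0 + ε := by
        rw [zero_add, div_mul_eq_mul_div, div_le_iff₀ (by positivity)]
        nlinarith
  have hsq : (fun x => g x * g x) = 0 :=
    (hper.comp fun t => t * t).eq_zero_of_setIntegral_Icc_eq_zero (hg.mul hg)
      (fun x => mul_self_nonneg (g x))
      (hsq_nonpos.antisymm <|
        setIntegral_nonneg measurableSet_Icc fun x _ => mul_self_nonneg (g x))
  exact funext fun x => mul_self_eq_zero.1 (congrFun hsq x)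

theorem ContinuousLinearMap.eq_zero_of_sum_sq_apply_single_eq_zero {n : ℕ}
    {L : (Fin n → ℝ) →L[ℝ] ℝ} (h : ∑ i, L (Pi.single i 1) ^ 2 = 0) : L = 0 := by
  have hL : ∀ i, L (Pi.single i 1) = 0 := fun i =>
    pow_eq_zero_iff two_ne_zero |>.1 <|
      (Finset.sum_eq_zero_iff_of_nonneg fun j _ => sq_nonneg _).1 h i (Finset.mem_univ i)
  exact coe_injective <| (Pi.basisFun ℝ (Fin n)).ext fun i => by simpa using hL i

theorem setIntegral_Icc_const_sub_mul_eq_neg {n : ℕ} {c u : (Fin n → ℝ) → ℝ}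
    (hc : Continuous c) (hu : Continuous u) (m : ℝ)
    (hmean : ∫ x in Icc (0 : Fin n → ℝ) 1, u x = 0) :
    ∫ x in Icc (0 : Fin n → ℝ) 1, (m - c x) * u x
      = -∫ x in Icc (0 : Fin n → ℝ) 1, c x * u x := by
  simp only [sub_mul]
  rw [integral_sub (g := fun x => c x * u x) (hu.integrableOn_Icc.const_mul _)
    (hc.mul hu).integrableOn_Icc, integral_const_mul, hmean, mul_zero, zero_sub]

theorem eq_zero_of_fderiv_eq_zero_of_setIntegral_Icc_eq_zero {n : ℕ} {u : (Fin n → ℝ) → ℝ}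
    (hu : Differentiable ℝ u) (hu' : ∀ x, fderiv ℝ u x = 0)
    (hmean : ∫ x in Icc (0 : Fin n → ℝ) 1, u x = 0) : u = 0 := by
  have hconst : ∀ x, u x = u 0 := fun x => is_const_of_fderiv_eq_zero hu hu' x 0
  rw [setIntegral_congr_fun measurableSet_Icc fun x _ => hconst x, setIntegral_const,
    volume_real_Icc_zero_one_pi, one_smul] at hmean
  exact funext fun x => (hconst x).trans hmean

section Energy

variable {n : ℕ} {a : (Fin n → ℝ) → Matrix (Fin n) (Fin n) ℝ} {C₀ : ℝ}

def UniformlyCoercive (a : (Fin n → ℝ) → Matrix (Fin n) (Fin n) ℝ) (C₀ : ℝ) : Prop :=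
  ∀ x (ξ : Fin n → ℝ), C₀ * ∑ i, ξ i ^ 2 ≤ ∑ i, ∑ j, a x i j * ξ i * ξ j

/-- `a(x)∇u(x)·∇v(x)`, the integrand of the weak formulation of `-div(a∇u) = f`. -/
noncomputable def energyDensity (a : (Fin n → ℝ) → Matrix (Fin n) (Fin n) ℝ)
    (u v : (Fin n → ℝ) → ℝ) (x : Fin n → ℝ) : ℝ :=
  ∑ i, ∑ j, a x i j * fderiv ℝ u x (Pi.single j 1) * fderiv ℝ v x (Pi.single i 1)

theorem continuous_energyDensity {u v : (Fin n → ℝ) → ℝ} (ha : Continuous a)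
    (hu : ContDiff ℝ 1 u) (hv : ContDiff ℝ 1 v) : Continuous (energyDensity a u v) := by
  have := hu.continuous_fderiv one_ne_zero
  have := hv.continuous_fderiv one_ne_zero
  unfold energyDensity
  fun_prop

theorem mul_sum_sq_le_energyDensity_self (ha_coer : UniformlyCoercive a C₀)
    (u : (Fin n → ℝ) → ℝ) (x : Fin n → ℝ) :
    C₀ * ∑ i, fderiv ℝ u x (Pi.single i 1) ^ 2 ≤ energyDensity a u u x :=
  (ha_coer x fun i => fderiv ℝ u x (Pi.single i 1)).trans_eq <|
    Finset.sum_congr rfl fun _ _ => Finset.sum_congr rfl fun _ _ => by ring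

theorem energyDensity_self_nonneg (hC₀ : 0 ≤ C₀) (ha_coer : UniformlyCoercive a C₀)
    (u : (Fin n → ℝ) → ℝ) (x : Fin n → ℝ) : 0 ≤ energyDensity a u u x :=
  le_trans (by positivity) (mul_sum_sq_le_energyDensity_self ha_coer u x)

theorem fderiv_eq_zero_of_setIntegral_Icc_energyDensity_eq_zero {u : (Fin n → ℝ) → ℝ}
    (ha : Continuous a) (hC₀ : 0 < C₀) (ha_coer : UniformlyCoercive a C₀)
    (hu : ContDiff ℝ 1 u) (hper : IntPeriodic u)
    (h : ∫ x in Icc (0 : Fin n → ℝ) 1, energyDensity a u u x = 0) (x : Fin n → ℝ) :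
    fderiv ℝ u x = 0 := by
  set S : (Fin n → ℝ) → ℝ := fun x => ∑ i, fderiv ℝ u x (Pi.single i 1) ^ 2
  have hS_cont : Continuous S := by
    have := hu.continuous_fderiv one_ne_zero
    fun_prop
  have hS_nonneg : 0 ≤ S := fun x => Finset.sum_nonneg fun i _ => sq_nonneg _
  have hS_int : ∫ x in Icc (0 : Fin n → ℝ) 1, S x = 0 := by
    have hle : C₀ * ∫ x in Icc (0 : Fin n → ℝ) 1, S x ≤ 0 := by
      rw [← integral_const_mul, ← h]
      exact setIntegral_mono_on (hS_cont.const_mul C₀).integrableOn_Icc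
        (continuous_energyDensity ha hu hu).integrableOn_Icc measurableSet_Icc
        fun x _ => mul_sum_sq_le_energyDensity_self ha_coer u x
    exact le_antisymm (nonpos_of_mul_nonpos_right hle hC₀)
      (setIntegral_nonneg measurableSet_Icc fun x _ => hS_nonneg x)
  have hS : S = 0 := (hper.fderiv.comp fun L => ∑ i, L (Pi.single i 1) ^ 2)
    |>.eq_zero_of_setIntegral_Icc_eq_zero hS_cont hS_nonneg hS_int
  exact ContinuousLinearMap.eq_zero_of_sum_sq_apply_single_eq_zero (congrFun hS x)

end Energy

theorem stmt10_general (n : ℕ)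
    (a : (Fin n → ℝ) → Matrix (Fin n) (Fin n) ℝ) (c N₁ : (Fin n → ℝ) → ℝ)
    (ha_cont : Continuous a) (hc_cont : Continuous c)
    (hc_per : ∀ (x : Fin n → ℝ) (k : Fin n → ℤ), c (x + fun i => (k i : ℝ)) = c x)
    (hN_per : ∀ (x : Fin n → ℝ) (k : Fin n → ℤ), N₁ (x + fun i => (k i : ℝ)) = N₁ x)
    (C₀ : ℝ) (hC₀ : 0 < C₀)
    (ha_coer : ∀ x (ξ : Fin n → ℝ), C₀ * ∑ i, ξ i ^ 2 ≤ ∑ i, ∑ j, a x i j * ξ i * ξ j)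
    (hN_diff : ContDiff ℝ 1 N₁)
    (hN_mean : ∫ x in Set.Icc (0 : Fin n → ℝ) 1, N₁ x = 0)
    (hweak : ∀ φ : (Fin n → ℝ) → ℝ, ContDiff ℝ 1 φ →
      (∀ (x : Fin n → ℝ) (k : Fin n → ℤ), φ (x + fun i => (k i : ℝ)) = φ x) →
      (∫ x in Set.Icc (0 : Fin n → ℝ) 1,
          ∑ i, ∑ j, a x i j * fderiv ℝ N₁ x (Pi.single j 1) * fderiv ℝ φ x (Pi.single i 1))
        = ∫ x in Set.Icc (0 : Fin n → ℝ) 1,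
            ((∫ y in Set.Icc (0 : Fin n → ℝ) 1, c y) - c x) * φ x) :
    ((¬ ∃ k : ℝ, ∀ x, c x = k) →
      (∫ x in Set.Icc (0 : Fin n → ℝ) 1, c x * N₁ x) < 0) ∧
    ((∃ k : ℝ, ∀ x, c x = k) →
      (∀ x, N₁ x = 0) ∧ (∫ x in Set.Icc (0 : Fin n → ℝ) 1, c x * N₁ x) = 0) := by
  have energy : ∫ x in Icc (0 : Fin n → ℝ) 1, energyDensity a N₁ N₁ x
      = -∫ x in Icc (0 : Fin n → ℝ) 1, c x * N₁ x :=
    (hweak N₁ hN_diff hN_per).trans <|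
      setIntegral_Icc_const_sub_mul_eq_neg hc_cont hN_diff.continuous _ hN_mean
  have hcN_nonpos : ∫ x in Icc (0 : Fin n → ℝ) 1, c x * N₁ x ≤ 0 := by
    have : 0 ≤ ∫ x in Icc (0 : Fin n → ℝ) 1, energyDensity a N₁ N₁ x :=
      setIntegral_nonneg measurableSet_Icc fun x _ =>
        energyDensity_self_nonneg hC₀.le ha_coer N₁ x
    linarith
  have hgrad (h0 : ∫ x in Icc (0 : Fin n → ℝ) 1, c x * N₁ x = 0) (x : Fin n → ℝ) :
      fderiv ℝ N₁ x = 0 :=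
    fderiv_eq_zero_of_setIntegral_Icc_energyDensity_eq_zero ha_cont hC₀ ha_coer hN_diff hN_per
      (by rw [energy, h0, neg_zero]) x
  have hc_const (h0 : ∫ x in Icc (0 : Fin n → ℝ) 1, c x * N₁ x = 0) :
      ∃ k : ℝ, ∀ x, c x = k := by
    have hc_mean : (fun x => (∫ y in Icc (0 : Fin n → ℝ) 1, c y) - c x) = 0 :=
      IntPeriodic.eq_zero_of_forall_setIntegral_Icc_mul_eq_zero (fun x k => by simp only [hc_per])
        (continuous_const.sub hc_cont) fun φ hφ hφ_per => by
          rw [← hweak φ hφ hφ_per]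
          simp [hgrad h0]
    exact ⟨_, fun x => (sub_eq_zero.1 (congrFun hc_mean x)).symm⟩
  refine ⟨fun hnc => hcN_nonpos.lt_of_ne (mt hc_const hnc), ?_⟩
  rintro ⟨k, hk⟩
  have h0 : ∫ x in Icc (0 : Fin n → ℝ) 1, c x * N₁ x = 0 := by
    simp only [hk]
    rw [integral_const_mul, hN_mean, mul_zero]
  exact ⟨congrFun (eq_zero_of_fderiv_eq_zero_of_setIntegral_Icc_eq_zero
    (hN_diff.differentiable one_ne_zero) (hgrad h0) hN_mean), h0⟩

/-- In the same setting: if `c` is not constant then `⟨cN₁⟩ < 0` strictly; if `c` is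
constant then `N₁ = 0` and `⟨cN₁⟩ = 0`. -/
theorem stmt10 (n : ℕ)
    (a : (Fin n → ℝ) → Matrix (Fin n) (Fin n) ℝ) (c N₁ : (Fin n → ℝ) → ℝ)
    (ha_cont : Continuous a) (hc_cont : Continuous c)
    (ha_per : ∀ (x : Fin n → ℝ) (k : Fin n → ℤ), a (x + fun i => (k i : ℝ)) = a x)
    (hc_per : ∀ (x : Fin n → ℝ) (k : Fin n → ℤ), c (x + fun i => (k i : ℝ)) = c x)
    (hN_per : ∀ (x : Fin n → ℝ) (k : Fin n → ℤ), N₁ (x + fun i => (k i : ℝ)) = N₁ x)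
    (ha_symm : ∀ x, (a x).IsSymm)
    (C₀ : ℝ) (hC₀ : 0 < C₀)
    (ha_coer : ∀ x (ξ : Fin n → ℝ), C₀ * ∑ i, ξ i ^ 2 ≤ ∑ i, ∑ j, a x i j * ξ i * ξ j)
    (hN_diff : ContDiff ℝ 1 N₁)
    (hN_mean : ∫ x in Set.Icc (0 : Fin n → ℝ) 1, N₁ x = 0)
    (hweak : ∀ φ : (Fin n → ℝ) → ℝ, ContDiff ℝ 1 φ →
      (∀ (x : Fin n → ℝ) (k : Fin n → ℤ), φ (x + fun i => (k i : ℝ)) = φ x) →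
      (∫ x in Set.Icc (0 : Fin n → ℝ) 1,
          ∑ i, ∑ j, a x i j * fderiv ℝ N₁ x (Pi.single j 1) * fderiv ℝ φ x (Pi.single i 1))
        = ∫ x in Set.Icc (0 : Fin n → ℝ) 1,
            ((∫ y in Set.Icc (0 : Fin n → ℝ) 1, c y) - c x) * φ x) :
    ((¬ ∃ k : ℝ, ∀ x, c x = k) →
      (∫ x in Set.Icc (0 : Fin n → ℝ) 1, c x * N₁ x) < 0) ∧
    ((∃ k : ℝ, ∀ x, c x = k) →
      (∀ x, N₁ x = 0) ∧ (∫ x in Set.Icc (0 : Fin n → ℝ) 1, c x * N₁ x) = 0) :=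
  stmt10_general n a c N₁ ha_cont hc_cont hc_per hN_per C₀ hC₀ ha_coer hN_diff hN_mean hweak
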